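/- Consistency lemma for the eikonal equation (Lemma 3.4). Let v : ℝ^N → ℝ be Lipschitz, let φ : (0,T]×ℝ^N → ℝ be bounded and C¹, and let (t₀,x₀) ∈ (0,T)×ℝ^N. There exists a function o : (0,1)×(0,1) → [0,∞) with o(ε,r) → 0 as (ε,r) → (0,0), depending only on φ, (t₀,x₀) and v, such that for all sufficiently small ε, r > 0 and all (t,x) in the ball B_r(t₀,x₀) there exist points x_P, y_P ∈ E^+(x) and x_C, y_C ∈ E^−(x) with: R^ε[φ](t,x) − φ(t,x) ≤ T_P(x,x_P)·(∂_tφ(t,x) + v_+(x)|D_xφ(t,x)| + o(ε,r)); R^ε[φ](t,x) − φ(t,x) ≥ T_P(x,y_P)·(∂_tφ(t,x) + v_+(x)|D_xφ(t,x)| − o(ε,r)); R_ε[φ](t,x) − φ(t,x) ≤ T_C(x,y_C)·(∂_tφ(t,x) − v_−(x)|D_xφ(t,x)| + o(ε,r)); and R_ε[φ](t,x) − φ(t,x) ≥ T_C(x,x_C)·(∂_tφ(t,x) − v_−(x)|D_xφ(t,x)| − o(ε,r)). -/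

import Mathlib

/-!
Write `ε = s⁴`, so that the cut-offs `ε^{1/2} = s²` and `ε^{3/2} = s⁶` of the time step are
polynomial in `s`. Near `(t₀, x₀)`, `φ(t + τ, y) - φ(t, x)` is `τ ∂ₜφ + ⟪∇φ, y - x⟫` up to
`o(τ + |y - x|)`. Since Paul moves at most `ε` while `T_P(x, x_P) · (v₊(x) + Lε + ε^{1/2}) ≥ ε`,
every move gains at most `T_P (∂ₜφ + v₊|∇φ| + o(1))`, which gives the upper bound for `R^ε`. For the
lower bound Paul steps a distance `ε - ε^{3/2}` in the direction of `∇φ`; this point is admissible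
unless `v₊(x) = O(ε)`, in which case any admissible point does. Carol's operator is Paul's one for
`-v` and `-φ`. Finally, an `o(ε, r)` is assembled from the bounds valid for each fixed tolerance.
-/


open MeasureTheory Metric Set Filter Topology RealInnerProductSpace

noncomputable section

attribute [local instance] Classical.propDecidable

/-- ℝ^N. -/
abbrev Euc (N : ℕ) := EuclideanSpace ℝ (Fin N)

/-- The cut-off function `C_ε(r) = (r ∨ ε^{3/2}) ∧ ε^{1/2}`. -/
def cutC (ε r : ℝ) : ℝ := min (max r (ε ^ ((3:ℝ)/2))) (ε ^ ((1:ℝ)/2))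

/-- Paul's admissible positions `E^+(x)`. -/
def Eplus {N : ℕ} (v : Euc N → ℝ) (ε : ℝ) (x : Euc N) : Set (Euc N) :=
  if (ball x ε ∩ {y | 0 < v y}).Nonempty then ball x ε ∩ {y | 0 < v y} else {x}

/-- Carol's admissible positions `E^-(x)`. -/
def Eminus {N : ℕ} (v : Euc N → ℝ) (ε : ℝ) (x : Euc N) : Set (Euc N) :=
  if (ball x ε ∩ {y | v y < 0}).Nonempty then ball x ε ∩ {y | v y < 0} else {x}

/-- Paul's time increment `T_P(x,x')`. -/
def TPe {N : ℕ} (v : Euc N → ℝ) (ε : ℝ) (x x' : Euc N) : ℝ :=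
  if (ball x ε ∩ {y | 0 < v y}).Nonempty then cutC ε (ε / max (v x') 0) else ε ^ 2

/-- Carol's time increment `T_C(x,x')`. -/
def TCe {N : ℕ} (v : Euc N → ℝ) (ε : ℝ) (x x' : Euc N) : ℝ :=
  if (ball x ε ∩ {y | v y < 0}).Nonempty then cutC ε (ε / max (-v x') 0) else ε ^ 2

/-- The operator `R^ε[φ](t,x) = sup_{x_P ∈ E^+(x)} φ(t + T_P(x,x_P), x_P)`. -/
def Rup {N : ℕ} (v : Euc N → ℝ) (ε : ℝ) (φ : ℝ → Euc N → ℝ) (t : ℝ) (x : Euc N) : ℝ :=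
  sSup ((fun xP => φ (t + TPe v ε x xP) xP) '' Eplus v ε x)

/-- The operator `R_ε[φ](t,x) = inf_{x_C ∈ E^-(x)} φ(t + T_C(x,x_C), x_C)`. -/
def Rlo {N : ℕ} (v : Euc N → ℝ) (ε : ℝ) (φ : ℝ → Euc N → ℝ) (t : ℝ) (x : Euc N) : ℝ :=
  sInf ((fun xC => φ (t + TCe v ε x xC) xC) '' Eminus v ε x)

/-- The one-step game operator `S^ε[φ](t,x)` for the eikonal game. -/
def Seik {N : ℕ} (v : Euc N → ℝ) (ε : ℝ) (φ : ℝ → Euc N → ℝ) (t : ℝ) (x : Euc N) : ℝ :=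
  sSup ((fun xP =>
      sInf ((fun xC => φ (t + TPe v ε x xP + TCe v ε xP xC) xC) '' Eminus v ε xP)) ''
    Eplus v ε x)

/-- Viscosity subsolution of `−∂_t u − v(x)|Du| = 0` on `(0,T)×ℝ^N`. -/
def EikSubsol {N : ℕ} (v : Euc N → ℝ) (T : ℝ) (u : ℝ → Euc N → ℝ) : Prop :=
  UpperSemicontinuousOn (fun p : ℝ × Euc N => u p.1 p.2) (Ioo (0:ℝ) T ×ˢ univ) ∧
  ∀ φ : ℝ → Euc N → ℝ, ContDiff ℝ 2 (fun p : ℝ × Euc N => φ p.1 p.2) →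
    ∀ t ∈ Ioo (0:ℝ) T, ∀ x : Euc N,
      (∃ δ > (0:ℝ), ∀ s ∈ Ioo (0:ℝ) T, ∀ y : Euc N, |s - t| < δ → dist y x < δ →
        u s y - φ s y ≤ u t x - φ t x) →
      -(deriv (fun s => φ s x) t) - v x * ‖gradient (φ t) x‖ ≤ 0

/-- Viscosity supersolution of `−∂_t u − v(x)|Du| = 0` on `(0,T)×ℝ^N`. -/
def EikSupersol {N : ℕ} (v : Euc N → ℝ) (T : ℝ) (u : ℝ → Euc N → ℝ) : Prop :=
  LowerSemicontinuousOn (fun p : ℝ × Euc N => u p.1 p.2) (Ioo (0:ℝ) T ×ˢ univ) ∧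
  ∀ φ : ℝ → Euc N → ℝ, ContDiff ℝ 2 (fun p : ℝ × Euc N => φ p.1 p.2) →
    ∀ t ∈ Ioo (0:ℝ) T, ∀ x : Euc N,
      (∃ δ > (0:ℝ), ∀ s ∈ Ioo (0:ℝ) T, ∀ y : Euc N, |s - t| < δ → dist y x < δ →
        u t x - φ t x ≤ u s y - φ s y) →
      0 ≤ -(deriv (fun s => φ s x) t) - v x * ‖gradient (φ t) x‖

/-- Upper relaxed semi-limit `limsup* u^ε`. -/
def relaxSup {N : ℕ} (u : ℝ → ℝ → Euc N → ℝ) (t : ℝ) (x : Euc N) : ℝ :=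
  sInf {a | ∃ δ > (0:ℝ), a = sSup ((fun q : ℝ × ℝ × Euc N => u q.1 q.2.1 q.2.2) ''
    {q | 0 < q.1 ∧ q.1 < δ ∧ |q.2.1 - t| < δ ∧ dist q.2.2 x < δ})}

/-- Lower relaxed semi-limit `liminf* u^ε`. -/
def relaxInf {N : ℕ} (u : ℝ → ℝ → Euc N → ℝ) (t : ℝ) (x : Euc N) : ℝ :=
  sSup {a | ∃ δ > (0:ℝ), a = sInf ((fun q : ℝ × ℝ × Euc N => u q.1 q.2.1 q.2.2) ''
    {q | 0 < q.1 ∧ q.1 < δ ∧ |q.2.1 - t| < δ ∧ dist q.2.2 x < δ})}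

open scoped NNReal

section CutOff

variable {s : ℝ}

theorem cutC_pow_four (hs : 0 ≤ s) (r : ℝ) :
    cutC (s ^ 4) r = min (max r (s ^ 6)) (s ^ 2) := by
  have h : ∀ (n : ℕ) (y : ℝ), 4 * y = n → (s ^ 4) ^ y = s ^ n := fun n y hy => by
    rw [← Real.rpow_natCast s 4, ← Real.rpow_mul hs, Nat.cast_ofNat, hy, Real.rpow_natCast]
  rw [cutC, h 6 _ (by norm_num), h 2 _ (by norm_num)]

theorem cutC_nonneg {ε : ℝ} (hε : 0 ≤ ε) (r : ℝ) : 0 ≤ cutC ε r :=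
  le_min (le_max_of_le_right (Real.rpow_nonneg hε _)) (Real.rpow_nonneg hε _)

theorem pow_four_le_cutC_mul (hs : 0 ≤ s) {w : ℝ} (hw : 0 < w) :
    s ^ 4 ≤ cutC (s ^ 4) (s ^ 4 / w) * (w + s ^ 2) := by
  rw [cutC_pow_four hs]
  rcases min_cases (max (s ^ 4 / w) (s ^ 6)) (s ^ 2) with ⟨h, -⟩ | ⟨h, -⟩ <;> rw [h]
  · have : s ^ 4 / w * w = s ^ 4 := div_mul_cancel₀ _ hw.ne'
    have hle : s ^ 4 / w ≤ max (s ^ 4 / w) (s ^ 6) := le_max_left _ _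
    have hm : 0 ≤ max (s ^ 4 / w) (s ^ 6) := le_max_of_le_right (pow_nonneg hs 6)
    nlinarith [mul_le_mul_of_nonneg_right hle hw.le, mul_nonneg hm (pow_nonneg hs 2)]
  · nlinarith [pow_nonneg hs 2]

theorem cutC_mul_le (hs : 0 ≤ s) {w : ℝ} (hw : 0 < w) :
    cutC (s ^ 4) (s ^ 4 / w) * w ≤ s ^ 4 + s ^ 6 * w := by
  have hmax : max (s ^ 4 / w) (s ^ 6) ≤ s ^ 4 / w + s ^ 6 :=
    max_le (by linarith [pow_nonneg hs 6]) (by linarith [div_nonneg (pow_nonneg hs 4) hw.le])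
  calc cutC (s ^ 4) (s ^ 4 / w) * w ≤ (s ^ 4 / w + s ^ 6) * w := by
        rw [cutC_pow_four hs]
        exact mul_le_mul_of_nonneg_right ((min_le_left _ _).trans hmax) hw.le
    _ = s ^ 4 + s ^ 6 * w := by field_simp

theorem three_mul_pow_four_add_sq_le {L K : ℝ} (hs0 : 0 ≤ s) (hs1 : s ≤ 1) (hL : 0 ≤ L)
    (hK : 2 * L + 2 ≤ K) : 3 * L * s ^ 4 + s ^ 2 ≤ s * K ^ 2 := by
  have h4 : s ^ 4 ≤ s := pow_le_of_le_one hs0 hs1 (by norm_num)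
  have h2 : s ^ 2 ≤ s := pow_le_of_le_one hs0 hs1 (by norm_num)
  have hK2 : 3 * L + 1 ≤ K ^ 2 := by nlinarith
  nlinarith [mul_le_mul_of_nonneg_left h4 hL, mul_le_mul_of_nonneg_left hK2 hs0]

end CutOff

theorem dist_add_smul_inv_norm_smul_le {E : Type*} [NormedAddCommGroup E] [NormedSpace ℝ E]
    (x g : E) {c : ℝ} (hc : 0 ≤ c) : dist (x + c • (‖g‖⁻¹ • g)) x ≤ c := by
  rw [dist_eq_norm, add_sub_cancel_left, norm_smul, Real.norm_of_nonneg hc, norm_smul, norm_inv,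
    norm_norm]
  exact mul_le_of_le_one_right hc inv_mul_le_one

theorem real_inner_smul_inv_norm_self {E : Type*} [NormedAddCommGroup E] [InnerProductSpace ℝ E]
    (g : E) : ⟪g, ‖g‖⁻¹ • g⟫ = ‖g‖ := by
  rw [real_inner_smul_right, real_inner_self_eq_norm_sq]
  rcases eq_or_ne ‖g‖ 0 with h | h
  · simp [h]
  · field_simp

theorem LipschitzWith.abs_le_abs_add_one {α : Type*} [PseudoMetricSpace α] {f : α → ℝ}
    {L : ℝ≥0} (hf : LipschitzWith L f) {x y : α} (h : dist x y < 1 / (L + 1)) :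
    |f x| ≤ |f y| + 1 := by
  have hL : L * dist x y ≤ 1 := by
    rw [lt_div_iff₀ (by positivity)] at h
    nlinarith [dist_nonneg (x := x) (y := y)]
  linarith [(abs_sub_abs_le_abs_sub (f x) (f y)).trans (hf.dist_le_mul x y)]

section Negation

variable {N : ℕ} (v : Euc N → ℝ) (ε : ℝ)

theorem Eplus_neg (x : Euc N) : Eplus (fun y => -v y) ε x = Eminus v ε x := by
  simp only [Eplus, Eminus, neg_pos]

theorem TPe_neg (x x' : Euc N) : TPe (fun y => -v y) ε x x' = TCe v ε x x' := by
  simp only [TPe, TCe, neg_pos]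

theorem Rup_neg (φ : ℝ → Euc N → ℝ) (t : ℝ) (x : Euc N) :
    Rup (fun y => -v y) ε (fun s y => -φ s y) t x = -Rlo v ε φ t x := by
  rw [Rup, Rlo, Real.sInf_def, neg_neg, Eplus_neg, ← Set.image_neg_eq_neg, Set.image_image]
  simp only [TPe_neg]

end Negation

section Admissible

variable {N : ℕ} {v : Euc N → ℝ} {ε : ℝ} {x z : Euc N}

theorem Eplus_nonempty : (Eplus v ε x).Nonempty := by
  unfold Eplus
  split_ifs with h
  exacts [h, singleton_nonempty x]

theorem mem_Eplus_of_mem (hz : z ∈ ball x ε ∩ {y | 0 < v y}) : z ∈ Eplus v ε x := by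
  rw [Eplus, if_pos ⟨z, hz⟩]
  exact hz

theorem dist_lt_of_mem_Eplus (hε : 0 < ε) (hz : z ∈ Eplus v ε x) : dist z x < ε := by
  unfold Eplus at hz
  split_ifs at hz
  · exact hz.1
  · rwa [mem_singleton_iff.1 hz, dist_self]

theorem TPe_eq_cutC (hz : z ∈ ball x ε ∩ {y | 0 < v y}) : TPe v ε x z = cutC ε (ε / v z) := by
  rw [TPe, if_pos ⟨z, hz⟩, max_eq_left hz.2.le]

theorem TPe_nonneg (hε : 0 ≤ ε) (z : Euc N) : 0 ≤ TPe v ε x z := by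
  unfold TPe
  split_ifs
  exacts [cutC_nonneg hε _, sq_nonneg ε]

theorem TCe_nonneg (hε : 0 ≤ ε) (z : Euc N) : 0 ≤ TCe v ε x z :=
  TPe_neg v ε x z ▸ TPe_nonneg hε z

end Admissible

section FirstOrder

variable {E : Type*} [NormedAddCommGroup E] [InnerProductSpace ℝ E]

def HasFirstOrderBound (φ : ℝ → E → ℝ) (t : ℝ) (x : E) (a : ℝ) (g : E) (θ τ₀ ρ : ℝ) : Prop :=
  ∀ τ y, 0 ≤ τ → τ ≤ τ₀ → dist y x < ρ →
    |φ (t + τ) y - φ t x - (τ * a + ⟪g, y - x⟫)| ≤ θ * max τ (dist y x)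

variable {φ : ℝ → E → ℝ} {t : ℝ} {x : E} {a : ℝ} {g : E} {θ τ₀ ρ : ℝ}

theorem HasFirstOrderBound.neg (h : HasFirstOrderBound φ t x a g θ τ₀ ρ) :
    HasFirstOrderBound (fun s y => -φ s y) t x (-a) (-g) θ τ₀ ρ := fun τ y h0 hτ hy => by
  rw [← abs_neg]
  convert h τ y h0 hτ hy using 2
  rw [inner_neg_left]
  ring

theorem HasFirstOrderBound.mono (h : HasFirstOrderBound φ t x a g θ τ₀ ρ) {τ₁ ρ₁ : ℝ}
    (hτ : τ₁ ≤ τ₀) (hρ : ρ₁ ≤ ρ) : HasFirstOrderBound φ t x a g θ τ₁ ρ₁ :=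
  fun τ y h0 hτ₁ hy => h τ y h0 (hτ₁.trans hτ) (hy.trans_le hρ)

end FirstOrder

def ConsistencyBounds {N : ℕ} (v : Euc N → ℝ) (ε : ℝ) (φ : ℝ → Euc N → ℝ) (t : ℝ) (x : Euc N)
    (a : ℝ) (g : Euc N) (κ : ℝ) : Prop :=
  (∃ xP ∈ Eplus v ε x,
    Rup v ε φ t x - φ t x ≤ TPe v ε x xP * (a + max (v x) 0 * ‖g‖ + κ)) ∧
  (∃ yP ∈ Eplus v ε x,
    Rup v ε φ t x - φ t x ≥ TPe v ε x yP * (a + max (v x) 0 * ‖g‖ - κ)) ∧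
  (∃ yC ∈ Eminus v ε x,
    Rlo v ε φ t x - φ t x ≤ TCe v ε x yC * (a - max (-v x) 0 * ‖g‖ + κ)) ∧
  (∃ xC ∈ Eminus v ε x,
    Rlo v ε φ t x - φ t x ≥ TCe v ε x xC * (a - max (-v x) 0 * ‖g‖ - κ))

theorem ConsistencyBounds.mono {N : ℕ} {v : Euc N → ℝ} {φ : ℝ → Euc N → ℝ} {t a : ℝ}
    {x g : Euc N} {ε κ κ' : ℝ} (hε : 0 ≤ ε) (hκ : κ ≤ κ')
    (h : ConsistencyBounds v ε φ t x a g κ) : ConsistencyBounds v ε φ t x a g κ' := by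
  obtain ⟨⟨xP, hxP, h₁⟩, ⟨yP, hyP, h₂⟩, ⟨yC, hyC, h₃⟩, ⟨xC, hxC, h₄⟩⟩ := h
  refine ⟨⟨xP, hxP, ?_⟩, ⟨yP, hyP, ?_⟩, ⟨yC, hyC, ?_⟩, ⟨xC, hxC, ?_⟩⟩
  · exact h₁.trans (mul_le_mul_of_nonneg_left (by linarith) (TPe_nonneg hε xP))
  · exact h₂.trans' (mul_le_mul_of_nonneg_left (by linarith) (TPe_nonneg hε yP))
  · exact h₃.trans (mul_le_mul_of_nonneg_left (by linarith) (TCe_nonneg hε yC))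
  · exact h₄.trans' (mul_le_mul_of_nonneg_left (by linarith) (TCe_nonneg hε xC))

section OneStep

variable {N : ℕ} {v : Euc N → ℝ} {L : ℝ≥0} {φ : ℝ → Euc N → ℝ} {t a θ s K : ℝ}
  {x g z : Euc N}

theorem pow_eight_le_TPe (hs0 : 0 < s) (hs1 : s ≤ 1) (z : Euc N) : s ^ 8 ≤ TPe v (s ^ 4) x z := by
  unfold TPe
  split_ifs
  · rw [cutC_pow_four hs0.le]
    exact le_min (le_max_of_le_right (pow_le_pow_of_le_one hs0.le hs1 (by norm_num)))
      (pow_le_pow_of_le_one hs0.le hs1 (by norm_num))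
  · rw [← pow_mul]

theorem TPe_le_sq (hs0 : 0 < s) (hs1 : s ≤ 1) (z : Euc N) : TPe v (s ^ 4) x z ≤ s ^ 2 := by
  unfold TPe
  split_ifs
  · rw [cutC_pow_four hs0.le]
    exact min_le_right _ _
  · rw [← pow_mul]
    exact pow_le_pow_of_le_one hs0.le hs1 (by norm_num)

theorem pow_four_le_TPe_mul (hv : LipschitzWith L v) (hs : 0 ≤ s)
    (hz : z ∈ ball x (s ^ 4) ∩ {y | 0 < v y}) :
    s ^ 4 ≤ TPe v (s ^ 4) x z * (max (v x) 0 + L * s ^ 4 + s ^ 2) := by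
  have hvz : v z ≤ max (v x) 0 + L * s ^ 4 := by
    have := mul_le_mul_of_nonneg_left (mem_ball.1 hz.1).le L.coe_nonneg
    linarith [hv.le_add_mul z x, le_max_left (v x) 0]
  rw [TPe_eq_cutC hz]
  exact (pow_four_le_cutC_mul hs hz.2).trans
    (mul_le_mul_of_nonneg_left (by linarith) (cutC_nonneg (by positivity) _))

theorem dist_le_TPe_mul (hv : LipschitzWith L v) (hs : 0 < s) (hz : z ∈ Eplus v (s ^ 4) x) :
    dist z x ≤ TPe v (s ^ 4) x z * (max (v x) 0 + L * s ^ 4 + s ^ 2) := by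
  unfold Eplus at hz
  split_ifs at hz
  · exact (mem_ball.1 hz.1).le.trans (pow_four_le_TPe_mul hv hs.le hz)
  · rw [mem_singleton_iff.1 hz, dist_self]
    exact mul_nonneg (TPe_nonneg (by positivity) x) (by positivity)

theorem max_add_mul_pow_four_add_sq_le (hs0 : 0 ≤ s) (hs1 : s ≤ 1)
    (hK : |v x| + 2 * L + 2 ≤ K) : max (v x) 0 + L * s ^ 4 + s ^ 2 ≤ K := by
  have := mul_le_mul_of_nonneg_left (pow_le_one₀ hs0 hs1 : s ^ 4 ≤ 1) L.coe_nonneg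
  have := pow_le_one₀ hs0 hs1 (n := 2)
  have := max_le (le_abs_self (v x)) (abs_nonneg (v x))
  linarith

theorem max_TPe_dist_le_mul (hv : LipschitzWith L v) (hs0 : 0 < s) (hs1 : s ≤ 1)
    (hK : |v x| + 2 * L + 2 ≤ K) (hz : z ∈ Eplus v (s ^ 4) x) :
    max (TPe v (s ^ 4) x z) (dist z x) ≤ TPe v (s ^ 4) x z * K := by
  have hT := TPe_nonneg (v := v) (x := x) (by positivity : (0 : ℝ) ≤ s ^ 4) z
  refine max_le (le_mul_of_one_le_right hT (by linarith [abs_nonneg (v x), L.coe_nonneg])) ?_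
  exact (dist_le_TPe_mul hv hs0 hz).trans
    (mul_le_mul_of_nonneg_left (max_add_mul_pow_four_add_sq_le hs0.le hs1 hK) hT)

theorem TPe_mul_max_sub_le (hv : LipschitzWith L v) (hs0 : 0 < s) (hs1 : s ≤ 1)
    (hK : |v x| + 2 * L + 2 ≤ K) {y : Euc N} (hdist : dist y x ≤ s ^ 4 - s ^ 6) (hvy : 0 < v y) :
    TPe v (s ^ 4) x y * max (v x) 0 - (s ^ 4 - s ^ 6) ≤ s ^ 6 * K := by
  have hs6 : s ^ 6 ≤ s ^ 4 := pow_le_pow_of_le_one hs0.le hs1 (by norm_num)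
  have hs4 : s ^ 4 ≤ 1 := pow_le_one₀ hs0.le hs1
  set T := TPe v (s ^ 4) x y
  have hT0 : 0 ≤ T := TPe_nonneg (by positivity) y
  have hLd := mul_le_mul_of_nonneg_left hdist L.coe_nonneg
  have hVy : max (v x) 0 ≤ v y + L * (s ^ 4 - s ^ 6) := by
    refine max_le ?_ (by linarith [mul_nonneg L.coe_nonneg (sub_nonneg.2 hs6)])
    linarith [dist_comm x y ▸ hv.le_add_mul x y]
  have hvy' : v y ≤ |v x| + L := by
    have := mul_le_mul_of_nonneg_left (hdist.trans (by linarith [pow_nonneg hs0.le 6]) :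
      dist y x ≤ 1) L.coe_nonneg
    linarith [hv.le_add_mul y x, le_abs_self (v x)]
  have hcut : T * v y ≤ s ^ 4 + s ^ 6 * v y := by
    rw [show T = _ from TPe_eq_cutC ⟨mem_ball.2 (hdist.trans_lt (by linarith [pow_pos hs0 6])),
      hvy⟩]
    exact cutC_mul_le hs0.le hvy
  have hTL : T * (L * (s ^ 4 - s ^ 6)) ≤ s ^ 2 * (L * s ^ 4) :=
    mul_le_mul (TPe_le_sq hs0 hs1 y) (mul_le_mul_of_nonneg_left (by linarith [pow_nonneg hs0.le 6])
      L.coe_nonneg) (mul_nonneg L.coe_nonneg (sub_nonneg.2 hs6)) (by positivity)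
  nlinarith [mul_le_mul_of_nonneg_left hVy hT0,
    mul_le_mul_of_nonneg_left hvy' (pow_nonneg hs0.le 6),
    mul_le_mul_of_nonneg_left hK (pow_nonneg hs0.le 6), pow_nonneg hs0.le 6]

section Estimates

variable (hv : LipschitzWith L v) (hs0 : 0 < s) (hs1 : s ≤ 1) (hθ : 0 ≤ θ)
  (hexp : HasFirstOrderBound φ t x a g θ (s ^ 2) (s ^ 4)) (hK : |v x| + 2 * L + 2 ≤ K)
include hv hs0 hs1 hθ hexp hK

theorem abs_sub_sub_le_TPe_mul (hz : z ∈ Eplus v (s ^ 4) x) :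
    |φ (t + TPe v (s ^ 4) x z) z - φ t x - TPe v (s ^ 4) x z * a| ≤
      TPe v (s ^ 4) x z * ((max (v x) 0 + L * s ^ 4 + s ^ 2) * ‖g‖ + θ * K) := by
  set T := TPe v (s ^ 4) x z
  have hT : 0 ≤ T := TPe_nonneg (by positivity) z
  have hlin := hexp T z hT (TPe_le_sq hs0 hs1 z) (dist_lt_of_mem_Eplus (by positivity) hz)
  have hinner : |⟪g, z - x⟫| ≤ ‖g‖ * (T * (max (v x) 0 + L * s ^ 4 + s ^ 2)) :=
    (abs_real_inner_le_norm g _).trans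
      (mul_le_mul_of_nonneg_left (dist_eq_norm z x ▸ dist_le_TPe_mul hv hs0 hz) (norm_nonneg g))
  have herr := mul_le_mul_of_nonneg_left (max_TPe_dist_le_mul hv hs0 hs1 hK hz) hθ
  rw [abs_le] at hlin hinner ⊢
  constructor <;> nlinarith

theorem le_Rup (hz : z ∈ Eplus v (s ^ 4) x) :
    φ (t + TPe v (s ^ 4) x z) z ≤ Rup v (s ^ 4) φ t x := by
  set c := a + (max (v x) 0 + L * s ^ 4 + s ^ 2) * ‖g‖ + θ * K
  refine le_csSup ⟨φ t x + |c|, ?_⟩ (mem_image_of_mem _ hz)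
  rintro _ ⟨y, hy, rfl⟩
  have hT0 := TPe_nonneg (v := v) (x := x) (by positivity : (0 : ℝ) ≤ s ^ 4) y
  have hT1 := (TPe_le_sq (v := v) (x := x) hs0 hs1 y).trans (pow_le_one₀ hs0.le hs1)
  have := (abs_le.1 (abs_sub_sub_le_TPe_mul hv hs0 hs1 hθ hexp hK hy)).2
  nlinarith [le_abs_self c, abs_nonneg c]

variable {η : ℝ} (hη : θ * K + s * K ^ 2 * (‖g‖ + 1) ≤ η)
include hη

theorem exists_Rup_sub_le : ∃ xP ∈ Eplus v (s ^ 4) x,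
    Rup v (s ^ 4) φ t x - φ t x ≤ TPe v (s ^ 4) x xP * (a + max (v x) 0 * ‖g‖ + η) := by
  -- an `s ^ 10`-maximiser suffices, since every time step is at least `s ^ 8`
  obtain ⟨_, ⟨xP, hxP, rfl⟩, hlt⟩ := exists_lt_of_lt_csSup (Eplus_nonempty.image _)
    (sub_lt_self (Rup v (s ^ 4) φ t x) (by positivity : (0 : ℝ) < s ^ 10))
  refine ⟨xP, hxP, ?_⟩
  set T := TPe v (s ^ 4) x xP
  have hT8 : s ^ 8 ≤ T := pow_eight_le_TPe hs0 hs1 xP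
  have hbound := (abs_le.1 (abs_sub_sub_le_TPe_mul hv hs0 hs1 hθ hexp hK hxP)).2
  have hsmall : (L * s ^ 4 + s ^ 2) * ‖g‖ + θ * K + s ^ 2 ≤ η := by
    have hsK := three_mul_pow_four_add_sq_le hs0.le hs1 L.coe_nonneg
      (by linarith [abs_nonneg (v x)] : 2 * (L : ℝ) + 2 ≤ K)
    have hLs : 0 ≤ (L : ℝ) * s ^ 4 := by positivity
    nlinarith [mul_le_mul_of_nonneg_right hsK (norm_nonneg g), mul_nonneg hLs (norm_nonneg g)]
  have hgap : s ^ 10 ≤ T * s ^ 2 := by nlinarith [pow_nonneg hs0.le 2]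
  nlinarith [mul_le_mul_of_nonneg_left hsmall (hT8.trans' (by positivity) : 0 ≤ T)]

theorem Rup_sub_ge_of_max_le (hV : max (v x) 0 ≤ L * s ^ 4) (hz : z ∈ Eplus v (s ^ 4) x) :
    Rup v (s ^ 4) φ t x - φ t x ≥ TPe v (s ^ 4) x z * (a + max (v x) 0 * ‖g‖ - η) := by
  have hT : 0 ≤ TPe v (s ^ 4) x z := TPe_nonneg (by positivity) z
  have hR := le_Rup hv hs0 hs1 hθ hexp hK hz
  have hbound := (abs_le.1 (abs_sub_sub_le_TPe_mul hv hs0 hs1 hθ hexp hK hz)).1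
  have hsK := three_mul_pow_four_add_sq_le hs0.le hs1 L.coe_nonneg
    (by linarith [abs_nonneg (v x)] : 2 * (L : ℝ) + 2 ≤ K)
  have hsmall : (2 * max (v x) 0 + L * s ^ 4 + s ^ 2) * ‖g‖ + θ * K ≤ η := by
    nlinarith [mul_le_mul_of_nonneg_right hsK (norm_nonneg g),
      mul_le_mul_of_nonneg_right hV (norm_nonneg g)]
  nlinarith [mul_le_mul_of_nonneg_left hsmall hT]

theorem Rup_sub_ge_of_pos {y : Euc N} (hy : y = x + (s ^ 4 - s ^ 6) • (‖g‖⁻¹ • g))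
    (hvy : 0 < v y) :
    Rup v (s ^ 4) φ t x - φ t x ≥ TPe v (s ^ 4) x y * (a + max (v x) 0 * ‖g‖ - η) := by
  have hs6 : s ^ 6 ≤ s ^ 4 := pow_le_pow_of_le_one hs0.le hs1 (by norm_num)
  have hdist : dist y x ≤ s ^ 4 - s ^ 6 := hy ▸ dist_add_smul_inv_norm_smul_le x g (by linarith)
  have hinner : ⟪g, y - x⟫ = (s ^ 4 - s ^ 6) * ‖g‖ := by
    rw [hy, add_sub_cancel_left, real_inner_smul_right, real_inner_smul_inv_norm_self]
  have hyP : y ∈ ball x (s ^ 4) ∩ {y | 0 < v y} :=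
    ⟨mem_ball.2 (hdist.trans_lt (by linarith [pow_pos hs0 6])), hvy⟩
  have hyE := mem_Eplus_of_mem hyP
  set T := TPe v (s ^ 4) x y
  have hT0 : 0 ≤ T := TPe_nonneg (by positivity) y
  -- the step towards `∇φ` gains `(s ^ 4 - s ^ 6) ‖g‖`, short of `T v₊(x) ‖g‖` by `O(s ^ 6)`
  have hshort := TPe_mul_max_sub_le hv hs0 hs1 hK hdist hvy
  have hs6T : s ^ 6 ≤ s ^ 2 * (T * K) := by
    have := (pow_four_le_TPe_mul hv hs0.le hyP).trans
      (mul_le_mul_of_nonneg_left (max_add_mul_pow_four_add_sq_le hs0.le hs1 hK) hT0)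
    nlinarith [pow_nonneg hs0.le 2]
  have hlin := (abs_le.1 (hexp T y hT0 (TPe_le_sq hs0 hs1 y) (mem_ball.1 hyP.1))).1
  have herr := mul_le_mul_of_nonneg_left (max_TPe_dist_le_mul hv hs0 hs1 hK hyE) hθ
  have hR := le_Rup hv hs0 hs1 hθ hexp hK hyE
  have hsmall : s ^ 2 * K ^ 2 * ‖g‖ + θ * K ≤ η := by
    have := pow_le_of_le_one hs0.le hs1 (by norm_num : 2 ≠ 0)
    nlinarith [mul_nonneg (sq_nonneg K) (norm_nonneg g)]
  have hK0 : 0 ≤ K := by linarith [abs_nonneg (v x), L.coe_nonneg]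
  nlinarith [mul_le_mul_of_nonneg_right hshort (norm_nonneg g),
    mul_le_mul_of_nonneg_right (mul_le_mul_of_nonneg_right hs6T hK0) (norm_nonneg g),
    mul_le_mul_of_nonneg_left hsmall hT0]

theorem exists_Rup_sub_ge : ∃ yP ∈ Eplus v (s ^ 4) x,
    Rup v (s ^ 4) φ t x - φ t x ≥ TPe v (s ^ 4) x yP * (a + max (v x) 0 * ‖g‖ - η) := by
  set y := x + (s ^ 4 - s ^ 6) • (‖g‖⁻¹ • g) with hy
  have hs6 : s ^ 6 ≤ s ^ 4 := pow_le_pow_of_le_one hs0.le hs1 (by norm_num)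
  have hdist : dist x y ≤ s ^ 4 - s ^ 6 :=
    dist_comm x y ▸ dist_add_smul_inv_norm_smul_le x g (by linarith)
  by_cases hvy : 0 < v y
  · have hyP : y ∈ ball x (s ^ 4) ∩ {y | 0 < v y} :=
      ⟨mem_ball'.2 (by linarith [pow_pos hs0 6]), hvy⟩
    exact ⟨y, mem_Eplus_of_mem hyP, Rup_sub_ge_of_pos hv hs0 hs1 hθ hexp hK hη hy hvy⟩
  · -- then `v₊(x) = O(s ^ 4)`, and any admissible point will do
    obtain ⟨z, hz⟩ := Eplus_nonempty (v := v) (ε := s ^ 4) (x := x)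
    refine ⟨z, hz, Rup_sub_ge_of_max_le hv hs0 hs1 hθ hexp hK hη ?_ hz⟩
    have := mul_le_mul_of_nonneg_left
      (hdist.trans (by linarith [pow_pos hs0 6] : s ^ 4 - s ^ 6 ≤ s ^ 4)) L.coe_nonneg
    exact max_le (by linarith [hv.le_add_mul x y]) (by positivity)

theorem exists_Rlo_sub_le : ∃ yC ∈ Eminus v (s ^ 4) x,
    Rlo v (s ^ 4) φ t x - φ t x ≤ TCe v (s ^ 4) x yC * (a - max (-v x) 0 * ‖g‖ + η) := by
  obtain ⟨yC, hyC, h⟩ := exists_Rup_sub_ge (v := fun y => -v y) hv.neg hs0 hs1 hθ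
    hexp.neg (by simpa only [abs_neg] using hK) (by simpa only [norm_neg] using hη)
  rw [Eplus_neg] at hyC
  rw [Rup_neg, TPe_neg, norm_neg] at h
  exact ⟨yC, hyC, by linarith⟩

theorem exists_Rlo_sub_ge : ∃ xC ∈ Eminus v (s ^ 4) x,
    Rlo v (s ^ 4) φ t x - φ t x ≥ TCe v (s ^ 4) x xC * (a - max (-v x) 0 * ‖g‖ - η) := by
  obtain ⟨xC, hxC, h⟩ := exists_Rup_sub_le (v := fun y => -v y) hv.neg hs0 hs1 hθ
    hexp.neg (by simpa only [abs_neg] using hK) (by simpa only [norm_neg] using hη)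
  rw [Eplus_neg] at hxC
  rw [Rup_neg, TPe_neg, norm_neg] at h
  exact ⟨xC, hxC, by linarith⟩

theorem consistencyBounds_of_hasFirstOrderBound : ConsistencyBounds v (s ^ 4) φ t x a g η :=
  ⟨exists_Rup_sub_le hv hs0 hs1 hθ hexp hK hη, exists_Rup_sub_ge hv hs0 hs1 hθ hexp hK hη,
    exists_Rlo_sub_le hv hs0 hs1 hθ hexp hK hη, exists_Rlo_sub_ge hv hs0 hs1 hθ hexp hK hη⟩

end Estimates

end OneStep

theorem ContDiffAt.exists_ball_norm_image_sub_le {E F : Type*} [NormedAddCommGroup E]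
    [NormedSpace ℝ E] [NormedAddCommGroup F] [NormedSpace ℝ F] {f : E → F} {x₀ : E}
    (hf : ContDiffAt ℝ 1 f x₀) {θ : ℝ} (hθ : 0 < θ) :
    ∃ δ > 0, ∀ x ∈ ball x₀ δ, DifferentiableAt ℝ f x ∧ ‖fderiv ℝ f x - fderiv ℝ f x₀‖ ≤ θ ∧
      ∀ y ∈ ball x₀ δ, ‖f y - f x - fderiv ℝ f x (y - x)‖ ≤ 2 * θ * ‖y - x‖ := by
  have hdiff : ∀ᶠ x in 𝓝 x₀, DifferentiableAt ℝ f x :=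
    (hf.eventually (by simp)).mono fun x hx => hx.differentiableAt one_ne_zero
  have hclose : ∀ᶠ x in 𝓝 x₀, ‖fderiv ℝ f x - fderiv ℝ f x₀‖ ≤ θ := by
    filter_upwards [(hf.continuousAt_fderiv one_ne_zero).eventually_mem
      (closedBall_mem_nhds _ hθ)] with x hx
    rwa [mem_closedBall, dist_eq_norm] at hx
  obtain ⟨δ, hδ, h⟩ := Metric.eventually_nhds_iff_ball.1 (hdiff.and hclose)
  refine ⟨δ, hδ, fun x hx => ⟨(h x hx).1, (h x hx).2, fun y hy => ?_⟩⟩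
  refine (convex_ball x₀ δ).norm_image_sub_le_of_norm_fderiv_le' (fun z hz => (h z hz).1)
    (fun z hz => ?_) hx hy
  calc ‖fderiv ℝ f z - fderiv ℝ f x‖
      ≤ ‖fderiv ℝ f z - fderiv ℝ f x₀‖ + ‖fderiv ℝ f x₀ - fderiv ℝ f x‖ :=
        norm_sub_le_norm_sub_add_norm_sub _ _ _
    _ ≤ 2 * θ := by rw [norm_sub_rev (fderiv ℝ f x₀)]; linarith [(h z hz).2, (h x hx).2]

section PartialDerivatives

variable {E : Type*} [NormedAddCommGroup E] [InnerProductSpace ℝ E] [CompleteSpace E]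
  {f : ℝ → E → ℝ} {D : ℝ × E →L[ℝ] ℝ} {t : ℝ} {x : E}

theorem HasFDerivAt.gradient_eq (h : HasFDerivAt (fun p : ℝ × E => f p.1 p.2) D (t, x)) :
    gradient (f t) x =
      (InnerProductSpace.toDual ℝ E).symm (D.comp (ContinuousLinearMap.inr ℝ ℝ E)) :=
  (h.comp x (hasFDerivAt_prodMk_right t x)).hasGradientAt.gradient

theorem HasFDerivAt.norm_gradient_le (h : HasFDerivAt (fun p : ℝ × E => f p.1 p.2) D (t, x)) :
    ‖gradient (f t) x‖ ≤ ‖D‖ := by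
  rw [h.gradient_eq, LinearIsometryEquiv.norm_map]
  exact (D.opNorm_comp_le _).trans
    (mul_le_of_le_one_right (norm_nonneg D) (ContinuousLinearMap.norm_inr_le_one ℝ ℝ E))

theorem HasFDerivAt.apply_eq_deriv_add_inner
    (h : HasFDerivAt (fun p : ℝ × E => f p.1 p.2) D (t, x)) (τ : ℝ) (w : E) :
    D (τ, w) = τ * deriv (fun s => f s x) t + ⟪gradient (f t) x, w⟫ := by
  have hderiv : deriv (fun s => f s x) t = D (1, 0) := by
    have := h.comp_hasDerivAt t ((hasDerivAt_id' t).prodMk (hasDerivAt_const t x))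
    exact this.deriv
  rw [hderiv, h.gradient_eq, InnerProductSpace.toDual_symm_apply, ContinuousLinearMap.comp_apply,
    ContinuousLinearMap.inr_apply, ← smul_eq_mul, ← map_smul, ← map_add]
  simp

end PartialDerivatives

theorem exists_hasFirstOrderBound_of_contDiffAt {E : Type*} [NormedAddCommGroup E]
    [InnerProductSpace ℝ E] [CompleteSpace E] {φ : ℝ → E → ℝ} {t₀ : ℝ} {x₀ : E}
    (hφ : ContDiffAt ℝ 1 (fun p : ℝ × E => φ p.1 p.2) (t₀, x₀)) {θ : ℝ} (hθ : 0 < θ) :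
    ∃ δ > 0, ∀ t x, dist (t, x) (t₀, x₀) < δ →
      ‖gradient (φ t) x‖ ≤ ‖fderiv ℝ (fun p : ℝ × E => φ p.1 p.2) (t₀, x₀)‖ + θ ∧
      HasFirstOrderBound φ t x (deriv (fun s => φ s x) t) (gradient (φ t) x) θ δ δ := by
  obtain ⟨δ, hδ, h⟩ := hφ.exists_ball_norm_image_sub_le (half_pos hθ)
  refine ⟨δ / 3, by positivity, fun t x hx => ?_⟩
  obtain ⟨hdiff, hclose, hmvt⟩ := h _ (mem_ball.2 (by linarith))
  have hD := hdiff.hasFDerivAt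
  have hgrad := hD.norm_gradient_le.trans (norm_le_norm_add_norm_sub' _
    (fderiv ℝ (fun p : ℝ × E => φ p.1 p.2) (t₀, x₀)))
  refine ⟨by linarith, fun τ y hτ0 hτ hy => ?_⟩
  have hstep : dist (t + τ, y) (t, x) = max τ (dist y x) := by
    rw [Prod.dist_eq, Real.dist_eq, add_sub_cancel_left, abs_of_nonneg hτ0]
  have hyδ : (t + τ, y) ∈ ball (t₀, x₀) δ := by
    have := dist_triangle (t + τ, y) (t, x) (t₀, x₀)
    exact mem_ball.2 (by linarith [max_le hτ hy.le])
  have := hmvt _ hyδ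
  rw [← dist_eq_norm (t + τ, y) (t, x), hstep, Prod.mk_sub_mk, add_sub_cancel_left,
    hD.apply_eq_deriv_add_inner, Real.norm_eq_abs] at this
  linarith

theorem exists_modulus {Q : ℝ → ℝ → ℝ → Prop} (hmono : ∀ ε r, 0 < ε → Monotone (Q ε r))
    (hQ : ∀ η > 0, ∃ ε₀ > 0, ∃ r₀ > 0, ∀ ε ∈ Ioo 0 ε₀, ∀ r ∈ Ioo 0 r₀, Q ε r η) :
    ∃ o : ℝ → ℝ → ℝ, (∀ ε r, 0 ≤ o ε r) ∧
      Tendsto (fun p : ℝ × ℝ => o p.1 p.2) (𝓝[Ioi 0 ×ˢ Ioi 0] ((0:ℝ), (0:ℝ))) (𝓝 0) ∧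
      ∃ ε₀ > (0:ℝ), ∃ r₀ > (0:ℝ), ∀ ε ∈ Ioo (0:ℝ) ε₀, ∀ r ∈ Ioo (0:ℝ) r₀, Q ε r (o ε r) := by
  set S : ℝ → ℝ → Set ℝ := fun ε r => {κ | 0 ≤ κ ∧ Q ε r κ}
  have hS : ∀ ε r, BddBelow (S ε r) := fun ε r => ⟨0, fun κ hκ => hκ.1⟩
  have hS0 : ∀ ε r, 0 ≤ sInf (S ε r) := fun ε r => Real.sInf_nonneg fun κ hκ => hκ.1
  -- the slack `|ε|` puts an admissible `κ` strictly below `o ε r`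
  refine ⟨fun ε r => sInf (S ε r) + |ε|, fun ε r => add_nonneg (hS0 ε r) (abs_nonneg ε), ?_, ?_⟩
  · rw [Metric.tendsto_nhdsWithin_nhds]
    intro η hη
    obtain ⟨ε₀, hε₀, r₀, hr₀, h⟩ := hQ (η / 2) (half_pos hη)
    refine ⟨min (min ε₀ r₀) (η / 2), by positivity, fun ⟨ε, r⟩ ⟨hε, hr⟩ hd => ?_⟩
    rw [mem_Ioi] at hε hr
    simp only [Prod.dist_eq, Real.dist_eq, sub_zero, abs_of_pos hε, abs_of_pos hr, max_lt_iff,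
      lt_min_iff] at hd
    have hinf : sInf (S ε r) ≤ η / 2 :=
      csInf_le (hS ε r) ⟨(half_pos hη).le, h ε ⟨hε, hd.1.1.1⟩ r ⟨hr, hd.1.2.2⟩⟩
    rw [Real.dist_eq, sub_zero, abs_of_nonneg (add_nonneg (hS0 ε r) (abs_nonneg ε)),
      abs_of_pos hε]
    linarith [hd.2.1]
  · obtain ⟨ε₀, hε₀, r₀, hr₀, h⟩ := hQ 1 one_pos
    refine ⟨ε₀, hε₀, r₀, hr₀, fun ε hε r hr => ?_⟩
    obtain ⟨κ, hκ, hlt⟩ := exists_lt_of_csInf_lt (s := S ε r) ⟨1, zero_le_one, h ε hε r hr⟩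
      (lt_add_of_pos_right (sInf (S ε r)) (abs_pos.2 hε.1.ne'))
    exact hmono ε r hε.1 hlt.le hκ.2

def EikonalConsistency {N : ℕ} (v : Euc N → ℝ) (φ : ℝ → Euc N → ℝ) (t₀ : ℝ) (x₀ : Euc N)
    (ε r κ : ℝ) : Prop :=
  ∀ (t : ℝ) (x : Euc N), dist (t, x) (t₀, x₀) < r →
    ConsistencyBounds v ε φ t x (deriv (fun s => φ s x) t) (gradient (φ t) x) κ

theorem exists_eikonalConsistency {N : ℕ} {v : Euc N → ℝ} {L : ℝ≥0} (hv : LipschitzWith L v)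
    {φ : ℝ → Euc N → ℝ} {t₀ : ℝ} {x₀ : Euc N}
    (hφ : ContDiffAt ℝ 1 (fun p : ℝ × Euc N => φ p.1 p.2) (t₀, x₀)) {η : ℝ} (hη : 0 < η) :
    ∃ ε₀ > 0, ∃ r₀ > 0, ∀ ε ∈ Ioo 0 ε₀, ∀ r ∈ Ioo 0 r₀, EikonalConsistency v φ t₀ x₀ ε r η := by
  set K := |v x₀| + 2 * L + 3
  have hK : 0 < K := by positivity
  obtain ⟨δ, hδ, hfirst⟩ :=
    exists_hasFirstOrderBound_of_contDiffAt hφ (by positivity : 0 < η / (2 * K))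
  set G := ‖fderiv ℝ (fun p : ℝ × Euc N => φ p.1 p.2) (t₀, x₀)‖ + η / (2 * K) + 1
  have hG : 0 < G := by positivity
  set s₀ := min (min 1 δ) (η / (2 * K ^ 2 * G))
  have hs₀ : 0 < s₀ := by positivity
  refine ⟨s₀ ^ 4, by positivity, min δ (1 / (L + 1)), by positivity, ?_⟩
  rintro ε ⟨hε, hεs⟩ r ⟨-, hr⟩ t x hd
  obtain ⟨s, hs, rfl⟩ : ∃ s, 0 < s ∧ s ^ 4 = ε :=
    ⟨ε ^ ((4 : ℕ)⁻¹ : ℝ), by positivity, Real.rpow_inv_natCast_pow hε.le (by norm_num)⟩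
  have hss₀ : s < s₀ := (pow_lt_pow_iff_left₀ hs.le hs₀.le (by norm_num)).1 hεs
  have hs1 : s ≤ 1 := by linarith [min_le_left (min 1 δ) (η / (2 * K ^ 2 * G)), min_le_left 1 δ]
  have hsδ : s ≤ δ := by
    linarith [min_le_left (min 1 δ) (η / (2 * K ^ 2 * G)), min_le_right 1 δ]
  have hsη : s ≤ η / (2 * K ^ 2 * G) := hss₀.le.trans (min_le_right _ _)
  have hdr : dist (t, x) (t₀, x₀) < min δ (1 / (L + 1)) := hd.trans hr
  obtain ⟨hg, hexp⟩ := hfirst t x (hdr.trans_le (min_le_left _ _))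
  refine consistencyBounds_of_hasFirstOrderBound hv hs hs1 (by positivity)
    (hexp.mono ((pow_le_of_le_one hs.le hs1 (by norm_num)).trans hsδ)
      ((pow_le_of_le_one hs.le hs1 (by norm_num)).trans hsδ)) (K := K) ?_ ?_
  · have hxx : dist x x₀ < 1 / (L + 1) :=
      ((le_max_right _ _).trans_eq (Prod.dist_eq ..).symm).trans_lt
        (hdr.trans_le (min_le_right _ _))
    linarith [hv.abs_le_abs_add_one hxx]
  · have hθK : η / (2 * K) * K = η / 2 := by field_simp
    have : s * K ^ 2 * (‖gradient (φ t) x‖ + 1) ≤ η / (2 * K ^ 2 * G) * K ^ 2 * G :=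
      mul_le_mul (mul_le_mul_of_nonneg_right hsη (by positivity)) (by linarith) (by positivity)
        (by positivity)
    have hsG : η / (2 * K ^ 2 * G) * K ^ 2 * G = η / 2 := by field_simp
    linarith

theorem consistency_eikonal_general
    {N : ℕ} (T : ℝ)
    (v : Euc N → ℝ) (hv : ∃ L, LipschitzWith L v)
    (φ : ℝ → Euc N → ℝ)
    (hφ : ContDiffOn ℝ 1 (fun p : ℝ × Euc N => φ p.1 p.2) (Ioc (0:ℝ) T ×ˢ univ))
    (t₀ : ℝ) (x₀ : Euc N) (ht₀ : t₀ ∈ Ioo (0:ℝ) T) :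
    ∃ o : ℝ → ℝ → ℝ, (∀ ε r, 0 ≤ o ε r) ∧
      Tendsto (fun p : ℝ × ℝ => o p.1 p.2) (𝓝[Ioi 0 ×ˢ Ioi 0] ((0:ℝ), (0:ℝ))) (𝓝 0) ∧
      ∃ ε₀ > (0:ℝ), ∃ r₀ > (0:ℝ), ∀ ε ∈ Ioo (0:ℝ) ε₀, ∀ r ∈ Ioo (0:ℝ) r₀,
        ∀ (t : ℝ) (x : Euc N), dist (t, x) (t₀, x₀) < r →
          (∃ xP ∈ Eplus v ε x,
            Rup v ε φ t x - φ t x ≤ TPe v ε x xP *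
              (deriv (fun s => φ s x) t + max (v x) 0 * ‖gradient (φ t) x‖ + o ε r)) ∧
          (∃ yP ∈ Eplus v ε x,
            Rup v ε φ t x - φ t x ≥ TPe v ε x yP *
              (deriv (fun s => φ s x) t + max (v x) 0 * ‖gradient (φ t) x‖ - o ε r)) ∧
          (∃ yC ∈ Eminus v ε x,
            Rlo v ε φ t x - φ t x ≤ TCe v ε x yC *
              (deriv (fun s => φ s x) t - max (-v x) 0 * ‖gradient (φ t) x‖ + o ε r)) ∧
          (∃ xC ∈ Eminus v ε x,
            Rlo v ε φ t x - φ t x ≥ TCe v ε x xC *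
              (deriv (fun s => φ s x) t - max (-v x) 0 * ‖gradient (φ t) x‖ - o ε r)) := by
  obtain ⟨L, hL⟩ := hv
  have hφ₀ : ContDiffAt ℝ 1 (fun p : ℝ × Euc N => φ p.1 p.2) (t₀, x₀) :=
    hφ.contDiffAt (prod_mem_nhds (Ioc_mem_nhds ht₀.1 ht₀.2) univ_mem)
  exact exists_modulus (Q := EikonalConsistency v φ t₀ x₀)
    (fun ε r hε _ _ hκ h t x hd => (h t x hd).mono hε.le hκ)
    (fun η hη => exists_eikonalConsistency hL hφ₀ hη)

/-- Lemma 3.4: consistency lemma for the eikonal equation. -/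
theorem consistency_eikonal
    {N : ℕ} (hN : 1 ≤ N) (T : ℝ) (hT : 0 < T)
    (v : Euc N → ℝ) (hv : ∃ L, LipschitzWith L v)
    (φ : ℝ → Euc N → ℝ)
    (hφ : ContDiffOn ℝ 1 (fun p : ℝ × Euc N => φ p.1 p.2) (Ioc (0:ℝ) T ×ˢ univ))
    (hφb : ∃ M, ∀ t ∈ Ioc (0:ℝ) T, ∀ x, |φ t x| ≤ M)
    (t₀ : ℝ) (x₀ : Euc N) (ht₀ : t₀ ∈ Ioo (0:ℝ) T) :
    ∃ o : ℝ → ℝ → ℝ, (∀ ε r, 0 ≤ o ε r) ∧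
      Tendsto (fun p : ℝ × ℝ => o p.1 p.2) (𝓝[Ioi 0 ×ˢ Ioi 0] ((0:ℝ), (0:ℝ))) (𝓝 0) ∧
      ∃ ε₀ > (0:ℝ), ∃ r₀ > (0:ℝ), ∀ ε ∈ Ioo (0:ℝ) ε₀, ∀ r ∈ Ioo (0:ℝ) r₀,
        ∀ (t : ℝ) (x : Euc N), dist (t, x) (t₀, x₀) < r →
          (∃ xP ∈ Eplus v ε x,
            Rup v ε φ t x - φ t x ≤ TPe v ε x xP *
              (deriv (fun s => φ s x) t + max (v x) 0 * ‖gradient (φ t) x‖ + o ε r)) ∧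
          (∃ yP ∈ Eplus v ε x,
            Rup v ε φ t x - φ t x ≥ TPe v ε x yP *
              (deriv (fun s => φ s x) t + max (v x) 0 * ‖gradient (φ t) x‖ - o ε r)) ∧
          (∃ yC ∈ Eminus v ε x,
            Rlo v ε φ t x - φ t x ≤ TCe v ε x yC *
              (deriv (fun s => φ s x) t - max (-v x) 0 * ‖gradient (φ t) x‖ + o ε r)) ∧
          (∃ xC ∈ Eminus v ε x,
            Rlo v ε φ t x - φ t x ≥ TCe v ε x xC *
              (deriv (fun s => φ s x) t - max (-v x) 0 * ‖gradient (φ t) x‖ - o ε r)) :=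
  consistency_eikonal_general T v hv φ hφ t₀ x₀ ht₀
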